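/- Let Q ⊆ V be nonempty with V∖Q nonempty, let μ > λ_max(A_{V∖Q}), the largest eigenvalue of the principal submatrix of A indexed by the elements of V∖Q, and let Γ̂_Q be the n×n diagonal matrix whose diagonal entries are 0 at indices in Q and 1 at indices in V∖Q. If X is a local maximizer of f_Q^μ(X) = Xᵀ(A − μ Γ̂_Q)X on Δ, then δ(X) ∩ Q ≠ ∅, where δ(X) = {i ∈ V : X_i > 0}. -/

import Mathlib

/-!
Suppose `X` vanishes on `Q`, and let `x` be its restriction to `V ∖ Q`. On such vectors the
penalty `μ Γ̂_Q` acts as `μ • 1`, so `f(X) = xᵀ A_{V∖Q} x - μ ‖x‖² ≤ (λ_max - μ) ‖x‖² < 0`.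
For `j ∈ Q` the row and column `j` of `A - μ Γ̂_Q` are those of `A`, hence nonnegative, so along
the segment from `X` to the vertex `e_j` the objective is at least `(1 - t)² f(X) > f(X)`:
`X` is not a local maximizer.
-/

open Matrix
open scoped ComplexOrder

theorem IsLocalMaxOn.eventually_lineMap_le {E β : Type*} [AddCommGroup E] [Module ℝ E]
    [TopologicalSpace E] [IsTopologicalAddGroup E] [ContinuousSMul ℝ E] [Preorder β]
    {f : E → β} {s : Set E} {a x : E} (hs : Convex ℝ s) (ha : a ∈ s) (hx : x ∈ s)
    (h : IsLocalMaxOn f s a) :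
    ∀ᶠ t in nhdsWithin (0 : ℝ) (Set.Ioi 0), f (AffineMap.lineMap a x t) ≤ f a := by
  have h_maps : Set.MapsTo (AffineMap.lineMap a x) (Set.Icc (0 : ℝ) 1) s := by
    simpa only [Set.mapsTo_iff_image_subset, ← segment_eq_image_lineMap]
      using hs.segment_subset ha hx
  have hline : IsLocalMaxOn (f ∘ AffineMap.lineMap a x) (Set.Icc (0 : ℝ) 1) 0 := by
    rw [← AffineMap.lineMap_apply_zero a x (k := ℝ)] at h
    exact h.comp_continuousOn h_maps AffineMap.lineMap_continuous.continuousOn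
      (Set.left_mem_Icc.2 zero_le_one)
  rw [IsLocalMaxOn, IsMaxFilter, nhdsWithin_Icc_eq_nhdsGE zero_lt_one] at hline
  simpa using hline.filter_mono (nhdsWithin_mono _ Set.Ioi_subset_Ici_self)

namespace Matrix

variable {ι : Type*} [Fintype ι]

section Support

variable {R : Type*} [CommSemiring R]

theorem dotProduct_eq_dotProduct_subtype {s : Finset ι} {x : ι → R} (hx : ∀ i ∉ s, x i = 0)
    (y : ι → R) : x ⬝ᵥ y = (fun i : s => x i) ⬝ᵥ (fun i : s => y i) := by
  simp only [dotProduct]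
  rw [Finset.sum_coe_sort s fun i => x i * y i]
  exact (Finset.sum_subset (Finset.subset_univ s) fun i _ hi => by simp [hx i hi]).symm

theorem dotProduct_mulVec_eq_submatrix {s : Finset ι} {x : ι → R} (hx : ∀ i ∉ s, x i = 0)
    (A : Matrix ι ι R) :
    x ⬝ᵥ A *ᵥ x
      = (fun i : s => x i) ⬝ᵥ A.submatrix Subtype.val Subtype.val *ᵥ (fun i : s => x i) := by
  rw [dotProduct_eq_dotProduct_subtype hx]
  congr 1
  ext i
  simp only [mulVec, submatrix_apply]
  rw [dotProduct_comm, dotProduct_eq_dotProduct_subtype hx, dotProduct_comm]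

theorem diagonal_mulVec_eq_self [DecidableEq ι] {g x : ι → R} (hg : ∀ i, x i ≠ 0 → g i = 1) :
    diagonal g *ᵥ x = x := by
  ext i
  rw [mulVec_diagonal]
  by_cases hi : x i = 0
  · simp [hi]
  · simp [hg i hi]

end Support

section Spectrum

variable [DecidableEq ι]

theorem IsHermitian.posSemidef_smul_one_sub {𝕜 : Type*} [RCLike 𝕜] {A : Matrix ι ι 𝕜}
    (hA : A.IsHermitian) {c : ℝ} (hc : ∀ i, hA.eigenvalues i ≤ c) :
    (c • 1 - A).PosSemidef := by
  set U : Matrix ι ι 𝕜 := (hA.eigenvectorUnitary : Matrix ι ι 𝕜)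
  have hU : U * star U = 1 := Unitary.mul_star_self_of_mem hA.eigenvectorUnitary.2
  have hdiag : diagonal (fun i => ((c - hA.eigenvalues i : ℝ) : 𝕜))
      = c • 1 - diagonal (RCLike.ofReal ∘ hA.eigenvalues) := by
    ext i j
    by_cases h : i = j <;> simp [h, RCLike.real_smul_eq_coe_mul]
  have hconj : c • 1 - A = U * diagonal (fun i => ((c - hA.eigenvalues i : ℝ) : 𝕜)) * star U := by
    conv_lhs => rw [hA.spectral_theorem, Unitary.conjStarAlgAut_apply, ← hU]
    rw [hdiag, mul_sub, sub_mul, mul_smul_comm, mul_one, smul_mul_assoc]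
  rw [hconj, Unitary.isUnit_coe.posSemidef_star_right_conjugate_iff, posSemidef_diagonal_iff]
  exact fun i => RCLike.ofReal_nonneg.mpr (sub_nonneg.mpr (hc i))

theorem IsHermitian.dotProduct_mulVec_le_iSup_eigenvalues_mul {A : Matrix ι ι ℝ}
    (hA : A.IsHermitian) (x : ι → ℝ) :
    x ⬝ᵥ A *ᵥ x ≤ (⨆ i, hA.eigenvalues i) * (x ⬝ᵥ x) := by
  have hpsd := hA.posSemidef_smul_one_sub fun i => le_ciSup (Set.finite_range _).bddAbove i
  simpa [sub_mulVec, smul_mulVec, dotProduct_sub] using hpsd.dotProduct_mulVec_nonneg x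

theorem dotProduct_sub_smul_diagonal_mulVec_neg {A : Matrix ι ι ℝ} {s : Finset ι}
    (hB : (A.submatrix (Subtype.val : s → ι) Subtype.val).IsHermitian) {μ : ℝ}
    (hμ : (⨆ i, hB.eigenvalues i) < μ) {g x : ι → ℝ} (hg : ∀ i ∈ s, g i = 1) (hx : x ≠ 0)
    (hxs : ∀ i ∉ s, x i = 0) :
    x ⬝ᵥ (A - μ • diagonal g) *ᵥ x < 0 := by
  set x' : s → ℝ := fun i => x i
  have hdiag : diagonal g *ᵥ x = x :=
    diagonal_mulVec_eq_self fun i hi => hg i (not_not.1 (mt (hxs i) hi))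
  have hpos : 0 < x' ⬝ᵥ x' := by
    rw [← dotProduct_eq_dotProduct_subtype hxs]
    simpa using dotProduct_self_star_pos_iff.2 hx
  calc x ⬝ᵥ (A - μ • diagonal g) *ᵥ x
      = x' ⬝ᵥ A.submatrix Subtype.val Subtype.val *ᵥ x' - μ * (x' ⬝ᵥ x') := by
        rw [sub_mulVec, smul_mulVec, hdiag, dotProduct_sub, dotProduct_smul, smul_eq_mul,
          dotProduct_mulVec_eq_submatrix hxs, dotProduct_eq_dotProduct_subtype hxs]
    _ ≤ ((⨆ i, hB.eigenvalues i) - μ) * (x' ⬝ᵥ x') := by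
        linarith [hB.dotProduct_mulVec_le_iSup_eigenvalues_mul x']
    _ < 0 := mul_neg_of_neg_of_pos (sub_neg.2 hμ) hpos

end Spectrum

theorem dotProduct_mulVec_lineMap_ge {M : Matrix ι ι ℝ} {x e : ι → ℝ}
    (hxe : 0 ≤ x ⬝ᵥ M *ᵥ e) (hex : 0 ≤ e ⬝ᵥ M *ᵥ x) (hee : 0 ≤ e ⬝ᵥ M *ᵥ e)
    {t : ℝ} (ht₀ : 0 ≤ t) (ht₁ : t ≤ 1) :
    (1 - t) ^ 2 * (x ⬝ᵥ M *ᵥ x)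
      ≤ AffineMap.lineMap x e t ⬝ᵥ M *ᵥ AffineMap.lineMap x e t := by
  have hexpand : AffineMap.lineMap x e t ⬝ᵥ M *ᵥ AffineMap.lineMap x e t
      = (1 - t) ^ 2 * (x ⬝ᵥ M *ᵥ x) + (1 - t) * t * (x ⬝ᵥ M *ᵥ e + e ⬝ᵥ M *ᵥ x)
        + t ^ 2 * (e ⬝ᵥ M *ᵥ e) := by
    simp only [AffineMap.lineMap_apply_module, mulVec_add, mulVec_smul, add_dotProduct,
      dotProduct_add, smul_dotProduct, dotProduct_smul, smul_eq_mul]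
    ring
  have hcross : 0 ≤ (1 - t) * t * (x ⬝ᵥ M *ᵥ e + e ⬝ᵥ M *ᵥ x) :=
    mul_nonneg (mul_nonneg (sub_nonneg.2 ht₁) ht₀) (add_nonneg hxe hex)
  have hsq : 0 ≤ t ^ 2 * (e ⬝ᵥ M *ᵥ e) := mul_nonneg (sq_nonneg t) hee
  linarith

theorem not_isLocalMaxOn_dotProduct_mulVec {M : Matrix ι ι ℝ} {s : Set (ι → ℝ)} {x e : ι → ℝ}
    (hs : Convex ℝ s) (hx : x ∈ s) (he : e ∈ s) (hneg : x ⬝ᵥ M *ᵥ x < 0)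
    (hxe : 0 ≤ x ⬝ᵥ M *ᵥ e) (hex : 0 ≤ e ⬝ᵥ M *ᵥ x) (hee : 0 ≤ e ⬝ᵥ M *ᵥ e) :
    ¬ IsLocalMaxOn (fun y => y ⬝ᵥ M *ᵥ y) s x := by
  intro hmax
  obtain ⟨t, hle, ht₀, ht₁⟩ :=
    ((hmax.eventually_lineMap_le hs hx he).and (Ioo_mem_nhdsGT zero_lt_one)).exists
  have hge := dotProduct_mulVec_lineMap_ge hxe hex hee ht₀.le ht₁.le
  nlinarith [mul_pos ht₀ (sub_pos.2 (ht₁.trans one_lt_two))]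

theorem not_isLocalMaxOn_dotProduct_mulVec_stdSimplex [DecidableEq ι] {M : Matrix ι ι ℝ}
    {x : ι → ℝ} (hx : x ∈ stdSimplex ℝ ι) (hneg : x ⬝ᵥ M *ᵥ x < 0) {j : ι}
    (hcol : ∀ i, 0 ≤ M i j) (hrow : ∀ k, 0 ≤ M j k) :
    ¬ IsLocalMaxOn (fun y => y ⬝ᵥ M *ᵥ y) (stdSimplex ℝ ι) x := by
  refine not_isLocalMaxOn_dotProduct_mulVec (convex_stdSimplex ℝ ι) hx
    (single_mem_stdSimplex ℝ j) hneg ?_ ?_ ?_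
  · rw [mulVec_single_one]
    exact dotProduct_nonneg_of_nonneg hx.1 hcol
  · rw [single_one_dotProduct]
    exact dotProduct_nonneg_of_nonneg hrow hx.1
  · simpa using hcol j

end Matrix

theorem stmt_12_general {n : ℕ} (A : Matrix (Fin n) (Fin n) ℝ)
    (hApos : ∀ i j, 0 ≤ A i j)
    (Q : Finset (Fin n)) (hQ : Q.Nonempty)
    (B : Matrix {i : Fin n // i ∈ Qᶜ} {i : Fin n // i ∈ Qᶜ} ℝ)
    (hB : B = A.submatrix Subtype.val Subtype.val)
    (hherm : B.IsHermitian)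
    (μ : ℝ) (hμ : (⨆ j, hherm.eigenvalues j) < μ)
    (X : Fin n → ℝ)
    (hX : X ∈ {y : Fin n → ℝ | ∑ i, y i = 1 ∧ ∀ i, 0 ≤ y i})
    (hmax : IsLocalMaxOn
      (fun y : Fin n → ℝ =>
        y ⬝ᵥ (A - μ • Matrix.diagonal fun i => if i ∈ Q then (0 : ℝ) else 1).mulVec y)
      {y : Fin n → ℝ | ∑ i, y i = 1 ∧ ∀ i, 0 ≤ y i} X) :
    ∃ i ∈ Q, 0 < X i := by
  subst hB
  have hΔ : {y : Fin n → ℝ | ∑ i, y i = 1 ∧ ∀ i, 0 ≤ y i} = stdSimplex ℝ (Fin n) := by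
    ext y
    simp [stdSimplex, and_comm]
  rw [hΔ] at hX hmax
  by_contra! hXQ
  have hsupp : ∀ i ∉ Qᶜ, X i = 0 := fun i hi =>
    le_antisymm (hXQ i (by simpa using hi)) (hX.1 i)
  have hX0 : X ≠ 0 := by
    rintro rfl
    simpa using hX.2
  obtain ⟨j, hj⟩ := hQ
  refine not_isLocalMaxOn_dotProduct_mulVec_stdSimplex hX
    (dotProduct_sub_smul_diagonal_mulVec_neg hherm hμ
      (g := fun i => if i ∈ Q then 0 else 1) (by simp +contextual) hX0 hsupp)
    (j := j) (fun i => ?_) (fun k => ?_) hmax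
  · rcases eq_or_ne i j with rfl | h <;> simp [*]
  · rcases eq_or_ne j k with rfl | h <;> simp [*]

/-- Constrained dominant sets for retrieval: if `μ > λ_max(A_{V∖Q})`, the largest
eigenvalue of the principal submatrix of `A` indexed by `V∖Q`, and `X` is a local
maximizer of `f_Q^μ(X) = Xᵀ(A − μ Γ̂_Q)X` on the standard simplex Δ, where `Γ̂_Q` is
the diagonal matrix with entries 0 on `Q` and 1 on `V∖Q`, then `δ(X) ∩ Q ≠ ∅`. -/
theorem stmt_12 {n : ℕ} (A : Matrix (Fin n) (Fin n) ℝ) (hA : A.IsSymm)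
    (hApos : ∀ i j, 0 ≤ A i j)
    (Q : Finset (Fin n)) (hQ : Q.Nonempty) (hQc : Qᶜ.Nonempty)
    (B : Matrix {i : Fin n // i ∈ Qᶜ} {i : Fin n // i ∈ Qᶜ} ℝ)
    (hB : B = A.submatrix Subtype.val Subtype.val)
    (hherm : B.IsHermitian)
    (μ : ℝ) (hμ : (⨆ j, hherm.eigenvalues j) < μ)
    (X : Fin n → ℝ)
    (hX : X ∈ {y : Fin n → ℝ | ∑ i, y i = 1 ∧ ∀ i, 0 ≤ y i})
    (hmax : IsLocalMaxOn
      (fun y : Fin n → ℝ =>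
        y ⬝ᵥ (A - μ • Matrix.diagonal fun i => if i ∈ Q then (0 : ℝ) else 1).mulVec y)
      {y : Fin n → ℝ | ∑ i, y i = 1 ∧ ∀ i, 0 ≤ y i} X) :
    ∃ i ∈ Q, 0 < X i :=
  stmt_12_general A hApos Q hQ B hB hherm μ hμ X hX hmax
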